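/- arXiv:2103.10266 — 2 statements merged into one kernel-verified Lean document; each statement's English description precedes it below -/
import Mathlib

section
/- Let L be piecewise affine with slopes p_1 < ... < p_{L-1} on consecutive intervals [u_k, u_{k+1}] covering [-1,1], and let μ : [0,π) → ℝ be continuous. Suppose u* : [0,π) → [-1,1] satisfies, for every t in an interval I ⊂ [0,π) on which μ(t) ≠ εp_k for all k, that u*(t) is the unique minimizer of u ↦ εL(u) - μ(t)u. Then u* is constant on each connected component of I, equal to some node u_k. In particular, u* cannot jump between non-adjacent nodes without μ crossing the corresponding intermediate slope values; hence u* satisfies the staircase property: at any switch between consecutive pieces with values s_m and s_{m+1}, the open interval (min(s_m,s_{m+1}), max(s_m,s_{m+1})) contains no node u_j. -/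
/-!
On the `k`-th segment the tilted cost `v ↦ εL(v) - c v` is affine with slope `εp_k - c`, so a
strict minimizer over `[-1, 1]` cannot be interior to a segment: it is a node `u_m`. Comparing
with the two neighbouring nodes and using that the slopes increase shows that `m` is the number
of slopes `εp_k` below `c`. On a connected set of times where `μ` avoids every `εp_k`, the
intermediate value theorem keeps each sign of `μ(t) - εp_k` fixed, hence `m` is fixed. At a switch
time `b`, passing to the limit from both sides puts `μ(b)` in the closed slope intervals
`[εp_{m-1}, εp_m]` of both nodes; since the slopes are strictly increasing, these intervals only
meet when the two nodes are adjacent.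
-/

open Set Filter Topology

def PiecewiseAffine {n : ℕ} (u : Fin (n + 2) → ℝ) (f : ℝ → ℝ) (q : Fin (n + 1) → ℝ) : Prop :=
  ∀ k : Fin (n + 1), ∀ x ∈ Icc (u k.castSucc) (u k.succ),
    f x = f (u k.castSucc) + q k * (x - u k.castSucc)

def IsStrictMinOn (f : ℝ → ℝ) (s : Set ℝ) (w : ℝ) : Prop :=
  w ∈ s ∧ ∀ v ∈ s, v ≠ w → f w < f v

/-- `c` lies in `[q (m - 1), q m]`, the subdifferential at the `m`-th node of a convex function
with slopes `q` (read `q (-1) = -∞` and `q (n + 1) = +∞`). -/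
def IsNodeSubgradient {n : ℕ} (q : Fin (n + 1) → ℝ) (m : Fin (n + 2)) (c : ℝ) : Prop :=
  ∀ k : Fin (n + 1), (k.castSucc < m → q k ≤ c) ∧ (m ≤ k.castSucc → c ≤ q k)

theorem IsPreconnected.lt_iff_lt_of_forall_ne {X α : Type*} [TopologicalSpace X] [LinearOrder α]
    [TopologicalSpace α] [OrderClosedTopology α] {I : Set X} (hI : IsPreconnected I) {f : X → α}
    (hf : ContinuousOn f I) {c : α} (hc : ∀ t ∈ I, f t ≠ c) {s t : X} (hs : s ∈ I) (ht : t ∈ I) :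
    c < f s ↔ c < f t := by
  have key : ∀ {s t}, s ∈ I → t ∈ I → c < f s → c < f t := fun {s t} hs ht hcs => by
    by_contra! hct
    obtain ⟨r, hr, hrc⟩ := hI.intermediate_value ht hs hf ⟨hct, hcs.le⟩
    exact hc r hr hrc
  exact ⟨key hs ht, key ht hs⟩

section Nodes

variable {n : ℕ}

theorem exists_mem_Icc_castSucc_succ (u : Fin (n + 2) → ℝ) {x : ℝ}
    (hx : x ∈ Icc (u 0) (u (Fin.last (n + 1)))) :
    ∃ k : Fin (n + 1), x ∈ Icc (u k.castSucc) (u k.succ) := by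
  by_contra! h
  simp only [mem_Icc, not_and, not_le] at h
  have hle : ∀ i, u i ≤ x := fun i => by
    induction i using Fin.induction with
    | zero => exact hx.1
    | succ k ih => exact (h k ih).le
  exact (h (Fin.last n) (hle _)).not_ge hx.2

theorem Monotone.mem_Icc_zero_last {u : Fin (n + 2) → ℝ} (hu : Monotone u) (i : Fin (n + 2)) :
    u i ∈ Icc (u 0) (u (Fin.last (n + 1))) :=
  ⟨hu (Fin.zero_le i), hu (Fin.le_last i)⟩

theorem Fin.eq_of_forall_castSucc_lt_iff {m m' : Fin (n + 1)}
    (h : ∀ k : Fin n, k.castSucc < m ↔ k.castSucc < m') : m = m' := by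
  by_contra hne
  wlog hlt : m < m' generalizing m m'
  · exact this (fun k => (h k).symm) (Ne.symm hne) ((Ne.symm hne).lt_of_le (not_lt.mp hlt))
  obtain ⟨k, rfl⟩ := Fin.exists_castSucc_eq.mpr (hlt.trans_le (Fin.le_last m')).ne
  exact lt_irrefl _ ((h k).mpr hlt)

theorem IsNodeSubgradient.le_of_lt {q : Fin (n + 1) → ℝ} (hq : StrictMono q)
    {m₁ m₂ j : Fin (n + 2)} {c : ℝ} (h₁ : IsNodeSubgradient q m₁ c)
    (h₂ : IsNodeSubgradient q m₂ c) (hj : m₁ < j) : m₂ ≤ j := by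
  by_contra! hj'
  obtain ⟨k, rfl⟩ := Fin.exists_succ_eq.mpr ((Fin.zero_le m₁).trans_lt hj).ne'
  obtain ⟨k', hk'⟩ := Fin.exists_castSucc_eq.mpr (hj'.trans_le (Fin.le_last m₂)).ne
  have hkk' : k < k' := by
    rw [← Fin.castSucc_lt_castSucc_iff, hk']
    exact Fin.castSucc_lt_succ
  have hc₁ : c ≤ q k := (h₁ k).2 (Fin.le_castSucc_iff.mpr hj)
  have hc₂ : q k' ≤ c := (h₂ k').1 (hk' ▸ hj')
  exact (hq hkk').not_ge (hc₂.trans hc₁)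

theorem IsNodeSubgradient.notMem_Ioo {u : Fin (n + 2) → ℝ} (hu : StrictMono u)
    {q : Fin (n + 1) → ℝ} (hq : StrictMono q) {m₁ m₂ : Fin (n + 2)} {c : ℝ}
    (h₁ : IsNodeSubgradient q m₁ c) (h₂ : IsNodeSubgradient q m₂ c) (j : Fin (n + 2)) :
    u j ∉ Ioo (min (u m₁) (u m₂)) (max (u m₁) (u m₂)) := by
  wlog hle : m₁ ≤ m₂ generalizing m₁ m₂
  · rw [min_comm, max_comm]
    exact this h₂ h₁ (le_of_not_ge hle)
  rw [min_eq_left (hu.monotone hle), max_eq_right (hu.monotone hle)]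
  rintro ⟨hj₁, hj₂⟩
  exact (h₁.le_of_lt hq h₂ (hu.lt_iff_lt.mp hj₁)).not_gt (hu.lt_iff_lt.mp hj₂)

end Nodes

section PiecewiseAffine

variable {n : ℕ} {u : Fin (n + 2) → ℝ} {f : ℝ → ℝ} {q : Fin (n + 1) → ℝ}

theorem PiecewiseAffine.tilt (hf : PiecewiseAffine u f q) (ε c : ℝ) :
    PiecewiseAffine u (fun x => ε * f x - c * x) (fun k => ε * q k - c) := by
  intro k x hx
  simp only [hf k x hx]
  ring

theorem PiecewiseAffine.exists_eq_of_isStrictMinOn (hf : PiecewiseAffine u f q)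
    (hu : Monotone u) {w : ℝ} (hw : IsStrictMinOn f (Icc (u 0) (u (Fin.last (n + 1)))) w) :
    ∃ m, w = u m := by
  obtain ⟨k, hk⟩ := exists_mem_Icc_castSucc_succ u hw.1
  by_contra! hne
  have hleft := hw.2 _ (hu.mem_Icc_zero_last _) (hne k.castSucc).symm
  have hright := hw.2 _ (hu.mem_Icc_zero_last _) (hne k.succ).symm
  rw [hf k w hk] at hleft hright
  rw [hf k _ ⟨hk.1.trans hk.2, le_rfl⟩] at hright
  have ha : 0 < w - u k.castSucc := sub_pos.mpr (hk.1.lt_of_ne (hne _).symm)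
  have hb : 0 < u k.succ - w := sub_pos.mpr (hk.2.lt_of_ne (hne _))
  nlinarith

theorem PiecewiseAffine.slope_pos_of_isStrictMinOn (hf : PiecewiseAffine u f q)
    (hu : StrictMono u) {k : Fin (n + 1)}
    (hmin : IsStrictMinOn f (Icc (u 0) (u (Fin.last (n + 1)))) (u k.castSucc)) : 0 < q k := by
  have hlt : u k.castSucc < u k.succ := hu Fin.castSucc_lt_succ
  have h := hmin.2 _ (hu.monotone.mem_Icc_zero_last _) hlt.ne'
  rw [hf k _ ⟨hlt.le, le_rfl⟩] at h
  nlinarith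

theorem PiecewiseAffine.slope_neg_of_isStrictMinOn (hf : PiecewiseAffine u f q)
    (hu : StrictMono u) {k : Fin (n + 1)}
    (hmin : IsStrictMinOn f (Icc (u 0) (u (Fin.last (n + 1)))) (u k.succ)) : q k < 0 := by
  have hlt : u k.castSucc < u k.succ := hu Fin.castSucc_lt_succ
  have h := hmin.2 _ (hu.monotone.mem_Icc_zero_last _) hlt.ne
  rw [hf k _ ⟨hlt.le, le_rfl⟩] at h
  nlinarith

theorem PiecewiseAffine.slope_neg_iff_of_isStrictMinOn (hf : PiecewiseAffine u f q)
    (hu : StrictMono u) (hq : Monotone q) {m : Fin (n + 2)}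
    (hmin : IsStrictMinOn f (Icc (u 0) (u (Fin.last (n + 1)))) (u m)) (k : Fin (n + 1)) :
    q k < 0 ↔ k.castSucc < m := by
  constructor
  · intro hk
    by_contra! hmk
    obtain ⟨m', rfl⟩ := Fin.exists_castSucc_eq.mpr (hmk.trans_lt (Fin.castSucc_lt_last k)).ne
    have hpos := hf.slope_pos_of_isStrictMinOn hu hmin
    exact (hpos.trans_le (hq (Fin.castSucc_le_castSucc_iff.mp hmk))).not_gt hk
  · intro hk
    obtain ⟨m', rfl⟩ := Fin.exists_succ_eq.mpr ((Fin.zero_le _).trans_lt hk).ne'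
    have hneg := hf.slope_neg_of_isStrictMinOn hu hmin
    exact (hq (Fin.castSucc_lt_succ_iff.mp hk)).trans_lt hneg

end PiecewiseAffine

section Minimizer

variable {n : ℕ} {u : Fin (n + 2) → ℝ} {L : ℝ → ℝ} {p : Fin (n + 1) → ℝ} {ε : ℝ}

theorem exists_node_of_isStrictMinOn_tilt (hu : StrictMono u) (hL : PiecewiseAffine u L p)
    (hp : Monotone p) (hε : 0 ≤ ε) {c w : ℝ}
    (hw : IsStrictMinOn (fun v => ε * L v - c * v) (Icc (u 0) (u (Fin.last (n + 1)))) w) :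
    ∃ m, w = u m ∧ ∀ k, (ε * p k < c ↔ k.castSucc < m) := by
  obtain ⟨m, rfl⟩ := (hL.tilt ε c).exists_eq_of_isStrictMinOn hu.monotone hw
  refine ⟨m, rfl, fun k => ?_⟩
  rw [← sub_neg]
  exact (hL.tilt ε c).slope_neg_iff_of_isStrictMinOn hu
    (fun i j hij => sub_le_sub_right (mul_le_mul_of_nonneg_left (hp hij) hε) c) hw k

variable {μ ustar : ℝ → ℝ} {T : Set ℝ}

theorem exists_forall_eq_node_of_ordConnected (hu : StrictMono u) (hL : PiecewiseAffine u L p)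
    (hp : Monotone p) (hε : 0 ≤ ε)
    (hmin : ∀ t ∈ T, (∀ k, μ t ≠ ε * p k) →
      IsStrictMinOn (fun v => ε * L v - μ t * v) (Icc (u 0) (u (Fin.last (n + 1)))) (ustar t))
    {I : Set ℝ} (hIT : I ⊆ T) (hI : I.OrdConnected) (hIne : I.Nonempty)
    (hμ : ContinuousOn μ I) (hcrit : ∀ t ∈ I, ∀ k, μ t ≠ ε * p k) :
    ∃ m, ∀ t ∈ I, ustar t = u m := by
  obtain ⟨t₀, ht₀⟩ := hIne
  obtain ⟨m, -, hm⟩ :=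
    exists_node_of_isStrictMinOn_tilt hu hL hp hε (hmin t₀ (hIT ht₀) (hcrit t₀ ht₀))
  refine ⟨m, fun t ht => ?_⟩
  obtain ⟨m', hm't, hm'⟩ :=
    exists_node_of_isStrictMinOn_tilt hu hL hp hε (hmin t (hIT ht) (hcrit t ht))
  have hsigns : ∀ k, ε * p k < μ t ↔ ε * p k < μ t₀ := fun k =>
    hI.isPreconnected.lt_iff_lt_of_forall_ne hμ (fun s hs => hcrit s hs k) ht ht₀
  have hm'm : m' = m := Fin.eq_of_forall_castSucc_lt_iff fun k => by rw [← hm k, ← hm' k, hsigns]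
  rw [hm't, hm'm]

theorem exists_isNodeSubgradient_of_tendsto (hu : StrictMono u) (hL : PiecewiseAffine u L p)
    (hp : Monotone p) (hε : 0 ≤ ε)
    (hmin : ∀ t ∈ T, (∀ k, μ t ≠ ε * p k) →
      IsStrictMinOn (fun v => ε * L v - μ t * v) (Icc (u 0) (u (Fin.last (n + 1)))) (ustar t))
    {l : Filter ℝ} [l.NeBot] {c s : ℝ} (hμ : Tendsto μ l (𝓝 c))
    (hs : ∀ᶠ t in l, t ∈ T ∧ (∀ k, μ t ≠ ε * p k) ∧ ustar t = s) :
    ∃ m, s = u m ∧ IsNodeSubgradient (fun k => ε * p k) m c := by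
  obtain ⟨t₀, ht₀T, hcrit₀, rfl⟩ := hs.exists
  obtain ⟨m, hm, -⟩ := exists_node_of_isStrictMinOn_tilt hu hL hp hε (hmin t₀ ht₀T hcrit₀)
  have hslope : ∀ᶠ t in l, ∀ k, (ε * p k < μ t ↔ k.castSucc < m) := by
    filter_upwards [hs] with t ⟨htT, hcrit, hst⟩
    obtain ⟨m', hm't, hm'⟩ := exists_node_of_isStrictMinOn_tilt hu hL hp hε (hmin t htT hcrit)
    rwa [hu.injective (hm't.symm.trans (hst.trans hm))] at hm'
  refine ⟨m, hm, fun k => ⟨fun hk => ge_of_tendsto hμ ?_, fun hk => le_of_tendsto hμ ?_⟩⟩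
  · filter_upwards [hslope] with t ht using ((ht k).mpr hk).le
  · filter_upwards [hslope] with t ht using not_lt.mp fun h => ((ht k).mp h).not_ge hk

theorem node_notMem_Ioo_of_switch (hu : StrictMono u) (hL : PiecewiseAffine u L p)
    (hp : StrictMono p) (hε : 0 < ε)
    (hmin : ∀ t ∈ T, (∀ k, μ t ≠ ε * p k) →
      IsStrictMinOn (fun v => ε * L v - μ t * v) (Icc (u 0) (u (Fin.last (n + 1)))) (ustar t))
    (hfin : {t ∈ T | ∃ k, μ t = ε * p k}.Finite) {a b c s₁ s₂ : ℝ} (hab : a < b) (hbc : b < c)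
    (hac : Ioo a c ⊆ T) (hμ : ContinuousWithinAt μ (Ioo a c) b)
    (h₁ : ∀ t ∈ Ioo a b, ustar t = s₁) (h₂ : ∀ t ∈ Ioo b c, ustar t = s₂) (j : Fin (n + 2)) :
    u j ∉ Ioo (min s₁ s₂) (max s₁ s₂) := by
  have hgood : ∀ᶠ t in 𝓝[≠] b, t ∈ Ioo a c → t ∈ T ∧ ∀ k, μ t ≠ ε * p k := by
    filter_upwards [nhdsNE_le_cofinite b hfin.eventually_cofinite_notMem] with t ht htac
    exact ⟨hac htac, fun k hk => ht ⟨hac htac, k, hk⟩⟩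
  have hleft : ∀ᶠ t in 𝓝[<] b, t ∈ T ∧ (∀ k, μ t ≠ ε * p k) ∧ ustar t = s₁ := by
    filter_upwards [nhdsLT_le_nhdsNE b hgood, Ioo_mem_nhdsLT hab] with t hgood_t ht
    obtain ⟨htT, hcrit⟩ := hgood_t ⟨ht.1, ht.2.trans hbc⟩
    exact ⟨htT, hcrit, h₁ t ht⟩
  have hright : ∀ᶠ t in 𝓝[>] b, t ∈ T ∧ (∀ k, μ t ≠ ε * p k) ∧ ustar t = s₂ := by
    filter_upwards [nhdsGT_le_nhdsNE b hgood, Ioo_mem_nhdsGT hbc] with t hgood_t ht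
    obtain ⟨htT, hcrit⟩ := hgood_t ⟨hab.trans ht.1, ht.2⟩
    exact ⟨htT, hcrit, h₂ t ht⟩
  obtain ⟨m₁, rfl, hm₁⟩ := exists_isNodeSubgradient_of_tendsto hu hL hp.monotone hε.le hmin
    (hμ.tendsto.mono_left (nhdsWithin_le_of_mem (mem_of_superset (Ioo_mem_nhdsLT hab)
      (Ioo_subset_Ioo_right hbc.le)))) hleft
  obtain ⟨m₂, rfl, hm₂⟩ := exists_isNodeSubgradient_of_tendsto hu hL hp.monotone hε.le hmin
    (hμ.tendsto.mono_left (nhdsWithin_le_of_mem (mem_of_superset (Ioo_mem_nhdsGT hbc)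
      (Ioo_subset_Ioo_left hab.le)))) hright
  exact hm₁.notMem_Ioo hu (hp.const_mul hε) hm₂ j

end Minimizer

theorem stmt8_general (n : ℕ) (u : Fin (n + 2) → ℝ) (hu : StrictMono u)
    (hu0 : u 0 = -1) (hulast : u (Fin.last (n + 1)) = 1)
    (p : Fin (n + 1) → ℝ) (hpmono : StrictMono p)
    (Lfun : ℝ → ℝ)
    (hLaff : ∀ k : Fin (n + 1), ∀ x ∈ Set.Icc (u k.castSucc) (u k.succ),
      Lfun x = Lfun (u k.castSucc) + p k * (x - u k.castSucc))
    (ε : ℝ) (hε : 0 < ε)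
    (μ : ℝ → ℝ) (hμ : ContinuousOn μ (Set.Icc 0 Real.pi))
    (ustar : ℝ → ℝ)
    (hargmin : ∀ t ∈ Set.Ico (0:ℝ) Real.pi, (∀ k, μ t ≠ ε * p k) →
      ustar t ∈ Set.Icc (-1:ℝ) 1 ∧
      ∀ v ∈ Set.Icc (-1:ℝ) 1, v ≠ ustar t →
        ε * Lfun (ustar t) - μ t * ustar t < ε * Lfun v - μ t * v) :
    (∀ I : Set ℝ, I ⊆ Set.Ico 0 Real.pi → I.OrdConnected → I.Nonempty →
      (∀ t ∈ I, ∀ k, μ t ≠ ε * p k) →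
      ∃ k : Fin (n + 2), ∀ t ∈ I, ustar t = u k) ∧
    ({t ∈ Set.Ico (0:ℝ) Real.pi | ∃ k, μ t = ε * p k}.Finite →
      ∀ a b c s₁ s₂ : ℝ, 0 ≤ a → a < b → b < c → c ≤ Real.pi →
        (∀ t ∈ Set.Ioo a b, ustar t = s₁) →
        (∀ t ∈ Set.Ioo b c, ustar t = s₂) →
        ∀ j : Fin (n + 2), u j ∉ Set.Ioo (min s₁ s₂) (max s₁ s₂)) := by
  have hmin : ∀ t ∈ Ico 0 Real.pi, (∀ k, μ t ≠ ε * p k) → IsStrictMinOn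
      (fun v => ε * Lfun v - μ t * v) (Icc (u 0) (u (Fin.last (n + 1)))) (ustar t) := by
    rw [hu0, hulast]
    exact hargmin
  refine ⟨fun I hIT hI hIne hcrit => exists_forall_eq_node_of_ordConnected hu hLaff
    hpmono.monotone hε.le hmin hIT hI hIne (hμ.mono (hIT.trans Ico_subset_Icc_self)) hcrit, ?_⟩
  intro hfin a b c s₁ s₂ ha hab hbc hcπ h₁ h₂ j
  have hac : Ioo a c ⊆ Ico 0 Real.pi := fun t ht => ⟨ha.trans ht.1.le, ht.2.trans_le hcπ⟩
  exact node_notMem_Ioo_of_switch hu hLaff hpmono hε hmin hfin hab hbc hac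
    ((hμ b ⟨ha.trans hab.le, hbc.le.trans hcπ⟩).mono (hac.trans Ico_subset_Icc_self)) h₁ h₂ j

/-- if `u*(t)` is the unique minimizer of `u ↦ εL(u) - μ(t)u`
whenever `μ(t)` avoids the critical values `εp_k`, then `u*` is constant,
equal to some node, on every connected set on which `μ` avoids all the `εp_k`;
moreover (staircase property) at any switch between consecutive constant
pieces with values `s₁` and `s₂`, no node lies in the open interval
`(min s₁ s₂, max s₁ s₂)`. -/
theorem stmt8 (n : ℕ) (u : Fin (n + 2) → ℝ) (hu : StrictMono u)
    (hu0 : u 0 = -1) (hulast : u (Fin.last (n + 1)) = 1)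
    (p : Fin (n + 1) → ℝ) (hpmono : StrictMono p)
    (Lfun : ℝ → ℝ) (hLconv : ConvexOn ℝ (Set.Icc (-1:ℝ) 1) Lfun)
    (hLaff : ∀ k : Fin (n + 1), ∀ x ∈ Set.Icc (u k.castSucc) (u k.succ),
      Lfun x = Lfun (u k.castSucc) + p k * (x - u k.castSucc))
    (ε : ℝ) (hε : 0 < ε)
    (μ : ℝ → ℝ) (hμ : ContinuousOn μ (Set.Icc 0 Real.pi))
    (ustar : ℝ → ℝ)
    (hargmin : ∀ t ∈ Set.Ico (0:ℝ) Real.pi, (∀ k, μ t ≠ ε * p k) →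
      ustar t ∈ Set.Icc (-1:ℝ) 1 ∧
      ∀ v ∈ Set.Icc (-1:ℝ) 1, v ≠ ustar t →
        ε * Lfun (ustar t) - μ t * ustar t < ε * Lfun v - μ t * v) :
    (∀ I : Set ℝ, I ⊆ Set.Ico 0 Real.pi → I.OrdConnected → I.Nonempty →
      (∀ t ∈ I, ∀ k, μ t ≠ ε * p k) →
      ∃ k : Fin (n + 2), ∀ t ∈ I, ustar t = u k) ∧
    ({t ∈ Set.Ico (0:ℝ) Real.pi | ∃ k, μ t = ε * p k}.Finite →
      ∀ a b c s₁ s₂ : ℝ, 0 ≤ a → a < b → b < c → c ≤ Real.pi →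
        (∀ t ∈ Set.Ioo a b, ustar t = s₁) →
        (∀ t ∈ Set.Ioo b c, ustar t = s₂) →
        ∀ j : Fin (n + 2), u j ∉ Set.Ioo (min s₁ s₂) (max s₁ s₂)) :=
  stmt8_general n u hu hu0 hulast p hpmono Lfun hLaff ε hε μ hμ ustar hargmin
end

section
/- Fix a finite set of frequencies E_a, E_b of positive integers and bounds: any measurable control u : [0,π) → [-1,1] which, outside a finite set, satisfies u(t) ∈ argmin_{|v|≤1}(εL(v) - μ(t)v) for the piecewise affine L with slopes (p_k)_{k=1}^{L-1} and μ(t) = Σ_{j∈E_a} a_j cos(jt) + Σ_{j∈E_b} b_j sin(jt) not identically zero, has at most M* switching points in [0,π), where M* depends only on max(E_a ∪ E_b) and L (the cardinality of the node set), and not on the coefficients a_j, b_j. Consequently ‖u‖_BV ≤ π + 2·M* uniformly over all such controls. -/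
/-!
On `z = exp (t I)`, `z ^ d (μ t - c)` is a nonzero polynomial of degree at most `2 d` in `z`,
so each level `μ = ε p k` is attained at most `2 d` times per period. Away from these crossings
`y = μ t` differs from every slope `ε p k`, and the convex piecewise affine function
`v ↦ ε L v - y v` then has the node where its slopes change sign as its only minimiser; by the
intermediate value theorem that node does not change between consecutive crossings. So `u`
agrees a.e. with a step function with node values and at most `(n + 1) · 2 d` switches, each of
which costs at most `2` in variation.
-/

open Set MeasureTheory
open scoped Finset ENNReal

namespace Complex

lemma exp_mul_I_pow_add_add_pow_sub (t : ℝ) {d j : ℕ} (hj : j ≤ d) :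
    exp (t * I) ^ (d + j) + exp (t * I) ^ (d - j) = exp (t * I) ^ d * (2 * Real.cos (j * t)) := by
  have h2 : (2 : ℂ) * Real.cos (j * t) = exp (j * t * I) + exp (-(j * t) * I) := by
    push_cast
    exact two_cos _
  simp only [← exp_nat_mul, h2, Nat.cast_add, Nat.cast_sub hj, mul_add, ← exp_add]
  ring_nf

lemma exp_mul_I_pow_add_sub_pow_sub (t : ℝ) {d j : ℕ} (hj : j ≤ d) :
    exp (t * I) ^ (d + j) - exp (t * I) ^ (d - j) =
      exp (t * I) ^ d * (2 * I * Real.sin (j * t)) := by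
  have h2 : (2 : ℂ) * I * Real.sin (j * t) = exp (j * t * I) - exp (-(j * t) * I) := by
    push_cast
    rw [mul_right_comm, two_sin, mul_assoc, I_mul_I]; ring
  simp only [← exp_nat_mul, h2, Nat.cast_add, Nat.cast_sub hj, mul_sub, ← exp_add]
  ring_nf

end Complex

section TrigPolynomial

open Polynomial

noncomputable def trigSum (Ea Eb : Finset ℕ) (a b : ℕ → ℝ) (t : ℝ) : ℝ :=
  ∑ j ∈ Ea, a j * Real.cos (j * t) + ∑ j ∈ Eb, b j * Real.sin (j * t)

lemma continuous_trigSum (Ea Eb : Finset ℕ) (a b : ℕ → ℝ) :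
    Continuous (trigSum Ea Eb a b) := by
  unfold trigSum
  fun_prop

open Complex in
/-- Multiplied by `z ^ d`, the trigonometric polynomial
`∑ a j cos (j t) + ∑ b j sin (j t) - c` becomes this polynomial in `z = exp (t I)`. -/
noncomputable def trigPolynomial (Ea Eb : Finset ℕ) (a b : ℕ → ℝ) (c : ℝ) (d : ℕ) : ℂ[X] :=
  ∑ j ∈ Ea, C ((a j : ℂ) / 2) * (X ^ (d + j) + X ^ (d - j)) +
    ∑ j ∈ Eb, C ((b j : ℂ) * (-I / 2)) * (X ^ (d + j) - X ^ (d - j)) - C (c : ℂ) * X ^ d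

variable {Ea Eb : Finset ℕ} {a b : ℕ → ℝ} {c : ℝ} {d : ℕ}

open Complex in
lemma trigPolynomial_eval_exp_mul_I (hEa : ∀ j ∈ Ea, j ≤ d) (hEb : ∀ j ∈ Eb, j ≤ d) (t : ℝ) :
    (trigPolynomial Ea Eb a b c d).eval (exp (t * I)) = exp (t * I) ^ d *
      ((trigSum Ea Eb a b t - c : ℝ) : ℂ) := by
  simp only [trigPolynomial, trigSum, eval_sub, eval_add, eval_finsetSum, eval_mul, eval_C,
    eval_pow, eval_X]
  rw [ofReal_sub, ofReal_add, ofReal_sum, ofReal_sum, mul_sub, mul_add, Finset.mul_sum,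
    Finset.mul_sum]
  congr 1
  congr 1
  · refine Finset.sum_congr rfl fun j hj => ?_
    rw [exp_mul_I_pow_add_add_pow_sub t (hEa j hj)]
    push_cast
    ring
  · refine Finset.sum_congr rfl fun j hj => ?_
    rw [exp_mul_I_pow_add_sub_pow_sub t (hEb j hj)]
    push_cast
    linear_combination (-(b j : ℂ) * exp (t * I) ^ d * sin (j * t)) * I_sq
  · ring

lemma trigPolynomial_coeff_add {j : ℕ} (hj : 0 < j) :
    (trigPolynomial Ea Eb a b c d).coeff (d + j) =
      (if j ∈ Ea then (a j : ℂ) / 2 else 0) +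
        (if j ∈ Eb then (b j : ℂ) * (-Complex.I / 2) else 0) := by
  have h1 : ∀ i, (d + j = d - i) ↔ False := fun i => iff_false_intro (by omega)
  have h2 : ∀ i, (d + j = d + i) ↔ j = i := fun i => by omega
  simp only [trigPolynomial, coeff_sub, coeff_add, finsetSum_coeff, coeff_C_mul, coeff_X_pow, h1,
    h2, if_false, add_zero, sub_zero, mul_zero, mul_ite, mul_one, Finset.sum_ite_eq,
    show d + j ≠ d by omega]

lemma trigPolynomial_ne_zero (hEa : ∀ j ∈ Ea, 0 < j) (hEb : ∀ j ∈ Eb, 0 < j)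
    (hab : (∃ j ∈ Ea, a j ≠ 0) ∨ (∃ j ∈ Eb, b j ≠ 0)) : trigPolynomial Ea Eb a b c d ≠ 0 := by
  intro h
  rcases hab with ⟨j, hj, hja⟩ | ⟨j, hj, hjb⟩
  · have hcoeff := congrArg (fun P => (P.coeff (d + j)).re) h
    simp only [trigPolynomial_coeff_add (hEa j hj), coeff_zero] at hcoeff
    by_cases hjb : j ∈ Eb <;> simp [hj, hjb] at hcoeff <;> exact hja (by linarith)
  · have hcoeff := congrArg (fun P => (P.coeff (d + j)).im) h
    simp only [trigPolynomial_coeff_add (hEb j hj), coeff_zero] at hcoeff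
    by_cases hja : j ∈ Ea <;> simp [hj, hja] at hcoeff <;> exact hjb (by linarith)

lemma trigPolynomial_natDegree_le (hEa : ∀ j ∈ Ea, j ≤ d) (hEb : ∀ j ∈ Eb, j ≤ d) :
    (trigPolynomial Ea Eb a b c d).natDegree ≤ 2 * d := by
  have hX : ∀ m ≤ 2 * d, ((X : ℂ[X]) ^ m).natDegree ≤ 2 * d := fun m hm => by
    simpa [natDegree_X_pow] using hm
  unfold trigPolynomial
  refine (natDegree_sub_le _ _).trans (max_le ((natDegree_add_le _ _).trans (max_le
    (natDegree_sum_le_of_forall_le _ _ fun j hj => ?_)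
    (natDegree_sum_le_of_forall_le _ _ fun j hj => ?_)))
    ((natDegree_C_mul_le _ _).trans (hX d (by omega))))
  · refine (natDegree_C_mul_le _ _).trans ((max_self (2 * d)).le.trans' ?_)
    exact natDegree_add_le_of_le (hX _ (by linarith [hEa j hj])) (hX _ (by omega))
  · refine (natDegree_C_mul_le _ _).trans ((max_self (2 * d)).le.trans' ?_)
    exact natDegree_sub_le_of_le (hX _ (by linarith [hEb j hj])) (hX _ (by omega))

open Complex in
lemma exists_finset_superset_trigSum_level (hEa : ∀ j ∈ Ea, 0 < j ∧ j ≤ d)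
    (hEb : ∀ j ∈ Eb, 0 < j ∧ j ≤ d) (hab : (∃ j ∈ Ea, a j ≠ 0) ∨ (∃ j ∈ Eb, b j ≠ 0)) (c : ℝ) :
    ∃ F : Finset ℝ, #F ≤ 2 * d ∧
      ∀ t ∈ Ioc (-Real.pi) Real.pi, trigSum Ea Eb a b t = c → t ∈ F := by
  classical
  set P := trigPolynomial Ea Eb a b c d
  have hP : P ≠ 0 :=
    trigPolynomial_ne_zero (fun j hj => (hEa j hj).1) (fun j hj => (hEb j hj).1) hab
  refine ⟨P.roots.toFinset.image arg, ?_, fun t ht htc => ?_⟩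
  · calc #(P.roots.toFinset.image arg) ≤ #P.roots.toFinset := Finset.card_image_le
      _ ≤ Multiset.card P.roots := Multiset.toFinset_card_le _
      _ ≤ P.natDegree := card_roots' P
      _ ≤ 2 * d :=
        trigPolynomial_natDegree_le (fun j hj => (hEa j hj).2) (fun j hj => (hEb j hj).2)
  · have hroot : P.IsRoot (exp (t * I)) := by
      rw [IsRoot, trigPolynomial_eval_exp_mul_I (fun j hj => (hEa j hj).2)
        (fun j hj => (hEb j hj).2), htc, sub_self, ofReal_zero, mul_zero]
    refine Finset.mem_image.2 ⟨exp (t * I), Multiset.mem_toFinset.2 ((mem_roots hP).2 hroot), ?_⟩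
    rw [exp_mul_I, arg_cos_add_sin_mul_I ht]

lemma exists_finset_trigSum_crossings {ι : Type*} [Fintype ι]
    (hEa : ∀ j ∈ Ea, 0 < j ∧ j ≤ d) (hEb : ∀ j ∈ Eb, 0 < j ∧ j ≤ d)
    (hab : (∃ j ∈ Ea, a j ≠ 0) ∨ (∃ j ∈ Eb, b j ≠ 0)) (c : ι → ℝ) {s : Set ℝ}
    (hs : s ⊆ Ioc (-Real.pi) Real.pi) :
    ∃ T : Finset ℝ, #T ≤ Fintype.card ι * (2 * d) ∧ ↑T ⊆ s ∧
      ∀ t ∈ s, ∀ k, trigSum Ea Eb a b t = c k → t ∈ T := by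
  classical
  choose F hFcard hF using fun k => exists_finset_superset_trigSum_level hEa hEb hab (c k)
  refine ⟨(Finset.univ.biUnion F).filter (· ∈ s), (Finset.card_filter_le _ _).trans
    (Finset.card_biUnion_le_card_mul _ _ _ fun k _ => hFcard k),
    fun t ht => (Finset.mem_filter.1 ht).2, fun t ht k htk => Finset.mem_filter.2
      ⟨Finset.mem_biUnion.2 ⟨k, Finset.mem_univ _, hF k t (hs ht) htk⟩, ht⟩⟩

end TrigPolynomial

/-- For increasing slopes `f`, the node at which the slopes cross the value `y`. -/
def levelIndex {α : Type*} [LinearOrder α] {n : ℕ} (f : Fin (n + 1) → α) (y : α) : Fin (n + 2) :=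
  ⟨#{k | f k < y}, Nat.lt_succ_of_le ((Finset.card_filter_le _ _).trans (Finset.card_fin _).le)⟩

section LevelIndex

variable {α : Type*} [LinearOrder α] {n : ℕ} {f : Fin (n + 1) → α}

lemma castSucc_lt_levelIndex_iff (hf : Monotone f) (y : α) (k : Fin (n + 1)) :
    k.castSucc < levelIndex f y ↔ f k < y := by
  show (k : ℕ) < #{i | f i < y} ↔ f k < y
  constructor
  · intro hk
    by_contra! hyk
    have hsub : ({i | f i < y} : Finset (Fin (n + 1))) ⊆ Finset.Iio k := fun i hi => by
      rw [Finset.mem_filter] at hi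
      exact Finset.mem_Iio.2 (lt_of_not_ge fun hki => (hi.2.trans_le hyk).not_ge (hf hki))
    have := Finset.card_le_card hsub
    rw [Fin.card_Iio] at this
    omega
  · intro hk
    have hsub : Finset.Iic k ⊆ ({i | f i < y} : Finset (Fin (n + 1))) := fun i hi =>
      Finset.mem_filter.2 ⟨Finset.mem_univ _, (hf (Finset.mem_Iic.1 hi)).trans_lt hk⟩
    have := Finset.card_le_card hsub
    rw [Fin.card_Iic] at this
    omega

lemma levelIndex_eq_of_isPreconnected {X : Type*} [TopologicalSpace X] {I : Set X}
    (hI : IsPreconnected I) {g : X → ℝ} (hg : ContinuousOn g I) {f : Fin (n + 1) → ℝ}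
    (hgf : ∀ t ∈ I, ∀ k, g t ≠ f k) {s t : X} (hs : s ∈ I) (ht : t ∈ I) :
    levelIndex f (g s) = levelIndex f (g t) := by
  have key : ∀ s ∈ I, ∀ t ∈ I, ∀ k, f k < g s → f k < g t := fun s hs t ht k hks => by
    by_contra! hkt
    obtain ⟨r, hr, hrk⟩ := hI.intermediate_value ht hs hg ⟨hkt, hks.le⟩
    exact hgf r hr k hrk
  simp only [levelIndex, Fin.mk.injEq]
  congr 1
  exact Finset.filter_congr fun k _ => ⟨key s hs t ht k, key t ht s hs k⟩

end LevelIndex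

lemma ConvexOn.le_right_of_isMinOn {𝕜 E β : Type*} [Semiring 𝕜] [PartialOrder 𝕜]
    [AddCommMonoid E] [LinearOrder β] [AddCommMonoid β] [SMul 𝕜 E] [Module 𝕜 β]
    [IsOrderedAddMonoid β] [PosSMulStrictMono 𝕜 β] {s : Set E} {g : E → β}
    (hg : ConvexOn 𝕜 s g) {x c w : E} (hx : x ∈ s) (hc : c ∈ s) (hmin : IsMinOn g s x)
    (hw : w ∈ segment 𝕜 x c) : g w ≤ g c :=
  (hg.le_on_segment hx hc hw).trans (max_le (hmin hc) le_rfl)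

lemma Monotone.apply_mem_Icc_zero_last {α : Type*} [Preorder α] {n : ℕ} {f : Fin (n + 1) → α}
    (hf : Monotone f) (k : Fin (n + 1)) : f k ∈ Icc (f 0) (f (Fin.last n)) :=
  ⟨hf (Fin.zero_le k), hf (Fin.le_last k)⟩

section PiecewiseAffine

variable {n : ℕ} {nodes : Fin (n + 2) → ℝ} {p : Fin (n + 1) → ℝ} {L : ℝ → ℝ}

lemma sub_eq_slope_mul_of_mem_Icc
    (hL : ∀ k : Fin (n + 1), ∀ x ∈ Icc (nodes k.castSucc) (nodes k.succ),
      L x = L (nodes k.castSucc) + p k * (x - nodes k.castSucc))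
    (k : Fin (n + 1)) {x w : ℝ} (hx : x ∈ Icc (nodes k.castSucc) (nodes k.succ))
    (hw : w ∈ Icc (nodes k.castSucc) (nodes k.succ)) :
    L x - L w = p k * (x - w) := by
  rw [hL k x hx, hL k w hw]
  ring

/-- If a minimiser `x` differed from the node `c = nodes (levelIndex p y)`, convexity would bound
`L v - y v` by its value at `c` on the segment from `x` to `c`; but on the piece next to `c` on
the side of `x` the slope `p i - y` has the sign that makes `L v - y v` exceed its value at `c`. -/
lemma eq_nodes_levelIndex_of_isMinOn (hnodes : StrictMono nodes) (hp : Monotone p)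
    (hLconv : ConvexOn ℝ (Icc (nodes 0) (nodes (Fin.last (n + 1)))) L)
    (hL : ∀ k : Fin (n + 1), ∀ x ∈ Icc (nodes k.castSucc) (nodes k.succ),
      L x = L (nodes k.castSucc) + p k * (x - nodes k.castSucc))
    {y : ℝ} (hy : ∀ k, y ≠ p k) {x : ℝ} (hx : x ∈ Icc (nodes 0) (nodes (Fin.last (n + 1))))
    (hmin : IsMinOn (fun v => L v - y * v) (Icc (nodes 0) (nodes (Fin.last (n + 1)))) x) :
    x = nodes (levelIndex p y) := by
  set K := levelIndex p y
  have hK := hnodes.monotone.apply_mem_Icc_zero_last K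
  have hg : ConvexOn ℝ (Icc (nodes 0) (nodes (Fin.last (n + 1)))) (fun v => L v - y * v) :=
    hLconv.sub ((LinearMap.mul ℝ ℝ y).concaveOn (convex_Icc _ _))
  have hlt_iff : ∀ i, i.castSucc < K ↔ p i < y := castSucc_lt_levelIndex_iff hp y
  have key : ∀ i w, w ∈ Icc (nodes i.castSucc) (nodes i.succ) →
      nodes K ∈ Icc (nodes i.castSucc) (nodes i.succ) → w ∈ segment ℝ x (nodes K) →
      0 < (p i - y) * (w - nodes K) → False := fun i w hwi hKi hw hpos => by
    have hle := hg.le_right_of_isMinOn hx hK hmin hw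
    have := sub_eq_slope_mul_of_mem_Icc hL i hwi hKi
    nlinarith
  by_contra hne
  rcases lt_or_gt_of_ne hne with hlt | hgt
  · have hK0 : K ≠ 0 := fun h => (h ▸ hlt).not_ge hx.1
    set i := K.pred hK0
    have hi : i.succ = K := Fin.succ_pred K hK0
    have hpi : p i < y := (hlt_iff i).1 (hi ▸ Fin.castSucc_lt_succ)
    obtain ⟨w, hw1, hw2⟩ := exists_between (max_lt hlt (hi ▸ hnodes Fin.castSucc_lt_succ))
    rw [max_lt_iff] at hw1
    exact key i w ⟨hw1.2.le, hi ▸ hw2.le⟩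
      ⟨(hi ▸ hnodes Fin.castSucc_lt_succ).le, (congrArg nodes hi).ge⟩
      (segment_eq_Icc hlt.le ▸ ⟨hw1.1.le, hw2.le⟩)
      (mul_pos_of_neg_of_neg (sub_neg.2 hpi) (sub_neg.2 hw2))
  · have hKl : K ≠ Fin.last (n + 1) := fun h => (h ▸ hgt).not_ge hx.2
    set i := K.castPred hKl
    have hi : i.castSucc = K := Fin.castSucc_castPred K hKl
    have hpi : y < p i := lt_of_le_of_ne (not_lt.1 fun h => ((hlt_iff i).2 h).ne hi) (hy i)
    obtain ⟨w, hw1, hw2⟩ := exists_between (lt_min hgt (hi ▸ hnodes Fin.castSucc_lt_succ))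
    rw [lt_min_iff] at hw2
    exact key i w ⟨hi ▸ hw1.le, hw2.2.le⟩
      ⟨(congrArg nodes hi).ge, (hi ▸ hnodes Fin.castSucc_lt_succ).le⟩
      (segment_eq_Icc' x (nodes K) ▸ ⟨by simp [hw1.le], by simp [hw2.1.le]⟩)
      (mul_pos (sub_pos.2 hpi) (sub_pos.2 hw1))

lemma eq_nodes_levelIndex_of_isPreconnected (hnodes : StrictMono nodes) (hn0 : nodes 0 = -1)
    (hnlast : nodes (Fin.last (n + 1)) = 1) (hp : Monotone p)
    (hLconv : ConvexOn ℝ (Icc (-1) 1) L)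
    (hL : ∀ k : Fin (n + 1), ∀ x ∈ Icc (nodes k.castSucc) (nodes k.succ),
      L x = L (nodes k.castSucc) + p k * (x - nodes k.castSucc))
    {ε : ℝ} (hε : 0 < ε) {μ : ℝ → ℝ} {I : Set ℝ} (hI : IsPreconnected I) (hμ : ContinuousOn μ I)
    (hlev : ∀ t ∈ I, ∀ k, μ t ≠ ε * p k) {t c : ℝ} (ht : t ∈ I) (hc : c ∈ I)
    {x : ℝ} (hx : x ∈ Icc (-1 : ℝ) 1)
    (hmin : ∀ v ∈ Icc (-1 : ℝ) 1, ε * L x - μ t * x ≤ ε * L v - μ t * v) :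
    x = nodes (levelIndex (fun k => ε * p k) (μ c)) := by
  rw [← levelIndex_eq_of_isPreconnected hI hμ hlev ht hc]
  rw [← hn0, ← hnlast] at hLconv hx hmin
  refine eq_nodes_levelIndex_of_isMinOn hnodes (hp.const_mul hε.le) (hLconv.smul hε.le)
    (fun k v hv => by rw [hL k v hv]; ring) (hlev t ht) hx (fun v hv => hmin v hv)

end PiecewiseAffine

lemma eVariationOn_comp_le_mul {α E : Type*} [LinearOrder α] [PseudoEMetricSpace E]
    {f : α → ℕ} {s : Set α} (hf : MonotoneOn f s) {g : ℕ → E} {C : ℝ≥0∞}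
    (hg : ∀ i j, edist (g i) (g j) ≤ C) {M : ℕ} (hM : ∀ t ∈ s, f t ≤ M) :
    eVariationOn (g ∘ f) s ≤ C * M := by
  refine iSup_le fun ⟨N, u, hu, hus⟩ => ?_
  have hfu : Monotone (f ∘ u) := fun i j hij => hf (hus i) (hus j) (hu hij)
  have hstep : ∀ i, edist (g (f (u (i + 1)))) (g (f (u i))) ≤
      C * ((f (u (i + 1)) - f (u i) : ℕ) : ℝ≥0∞) := fun i => by
    rcases (hfu (Nat.le_succ i)).eq_or_lt with h | h
    · simp [Function.comp_apply ▸ h]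
    · exact (hg _ _).trans (le_mul_of_one_le_right' (Nat.one_le_cast.2 (by simp at h; omega)))
  calc ∑ i ∈ Finset.range N, edist ((g ∘ f) (u (i + 1))) ((g ∘ f) (u i))
      ≤ ∑ i ∈ Finset.range N, C * ((f (u (i + 1)) - f (u i) : ℕ) : ℝ≥0∞) :=
        Finset.sum_le_sum fun i _ => hstep i
    _ = C * ((f (u N) - f (u 0) : ℕ) : ℝ≥0∞) := by
        rw [← Finset.mul_sum, ← Nat.cast_sum]
        congr 2
        exact Finset.sum_range_tsub hfu N
    _ ≤ C * M := by gcongr; exact (Nat.sub_le _ _).trans (hM _ (hus N))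

section Partition

variable {α : Type*} [LinearOrder α] {φ : ℕ → α} {M : ℕ}

/-- For `φ 0 < ⋯ < φ (M + 1)`, the index of the piece `[φ m, φ (m + 1))` containing `t`. -/
def pieceIndex (φ : ℕ → α) (M : ℕ) (t : α) : ℕ := #{i ∈ Finset.Icc 1 M | φ i ≤ t}

lemma pieceIndex_eq (hφ : StrictMonoOn φ (Iic (M + 1))) {m : ℕ} (hm : m ≤ M) {t : α}
    (ht : t ∈ Ico (φ m) (φ (m + 1))) : pieceIndex φ M t = m := by
  have : {i ∈ Finset.Icc 1 M | φ i ≤ t} = Finset.Icc 1 m := by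
    ext i
    simp only [Finset.mem_filter, Finset.mem_Icc]
    constructor
    · rintro ⟨⟨hi1, hiM⟩, hit⟩
      refine ⟨hi1, not_lt.1 fun hmi => (ht.2.trans_le (le_trans ?_ hit)).false⟩
      exact hφ.monotoneOn (by simp; omega) (by simp; omega) (Nat.succ_le_of_lt hmi)
    · rintro ⟨hi1, him⟩
      exact ⟨⟨hi1, him.trans hm⟩, (hφ.monotoneOn (by simp; omega) (by simp; omega) him).trans ht.1⟩
  rw [pieceIndex, this, Nat.card_Icc, Nat.add_sub_cancel]

lemma monotone_pieceIndex : Monotone (pieceIndex φ M) := fun _ _ hst =>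
  Finset.card_le_card fun i hi => by
    simp only [Finset.mem_filter] at hi ⊢
    exact ⟨hi.1, hi.2.trans hst⟩

lemma pieceIndex_le (t : α) : pieceIndex φ M t ≤ M :=
  (Finset.card_filter_le _ _).trans (Nat.card_Icc 1 M).le

lemma exists_mem_Ico_piece {t : α} (ht : t ∈ Ico (φ 0) (φ (M + 1))) :
    ∃ m ≤ M, t ∈ Ico (φ m) (φ (m + 1)) := by
  refine ⟨Nat.findGreatest (φ · ≤ t) M, Nat.findGreatest_le M,
    Nat.findGreatest_spec (P := (φ · ≤ t)) (Nat.zero_le M) ht.1, not_le.1 fun h => ?_⟩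
  rcases (Nat.findGreatest_le (P := (φ · ≤ t)) M).eq_or_lt with he | hlt
  · exact ht.2.not_ge (he ▸ h)
  · exact (Nat.le_findGreatest hlt h).not_gt (Nat.lt_succ_self _)

end Partition

lemma exists_partition {α : Type*} [LinearOrder α] {a b : α} (hab : a < b) (T : Finset α)
    (hT : ↑T ⊆ Ioo a b) :
    ∃ φ : ℕ → α, φ 0 = a ∧ φ (#T + 1) = b ∧ StrictMonoOn φ (Iic (#T + 1)) ∧
      ∀ m ≤ #T, Ioo (φ m) (φ (m + 1)) ⊆ Ioo a b \ T := by
  classical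
  set T' := insert a (insert b T)
  have hbT : b ∉ T := fun h => (hT h).2.false
  have hcard : #T' = #T + 2 := by
    rw [Finset.card_insert_of_notMem, Finset.card_insert_of_notMem hbT]
    simp only [Finset.mem_insert, not_or]
    exact ⟨hab.ne, fun h => (hT h).1.false⟩
  have hT' : ∀ x ∈ T', x ∈ Icc a b := by
    simp only [T', Finset.mem_insert]
    rintro x (rfl | rfl | hx)
    exacts [⟨le_rfl, hab.le⟩, ⟨hab.le, le_rfl⟩, Ioo_subset_Icc_self (hT hx)]
  set e := T'.orderEmbOfFin hcard
  let φ : ℕ → α := fun m => if h : m < #T + 2 then e ⟨m, h⟩ else b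
  have hφe : ∀ j : Fin (#T + 2), φ j = e j := fun j => dif_pos j.isLt
  have hφmono : StrictMonoOn φ (Iic (#T + 1)) := fun i hi j hj hij =>
    (hφe ⟨i, Nat.lt_succ_of_le hi⟩).trans_lt
      ((e.strictMono hij).trans_eq (hφe ⟨j, Nat.lt_succ_of_le hj⟩).symm)
  have hφT' : ∀ x ∈ T', ∃ j ≤ #T + 1, φ j = x := fun x hx => by
    obtain ⟨j, rfl⟩ : x ∈ range e := by rwa [Finset.range_orderEmbOfFin]
    exact ⟨j, Nat.le_of_lt_succ j.isLt, hφe j⟩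
  have hφ0 : φ 0 = a := by
    obtain ⟨j, hj, hja⟩ := hφT' a (Finset.mem_insert_self _ _)
    refine le_antisymm (hja ▸ hφmono.monotoneOn (Nat.zero_le _) hj (Nat.zero_le j)) ?_
    exact (hφe ⟨0, by omega⟩ ▸ hT' _ (Finset.orderEmbOfFin_mem _ _ _)).1
  have hφlast : φ (#T + 1) = b := by
    obtain ⟨j, hj, hjb⟩ := hφT' b (Finset.mem_insert_of_mem (Finset.mem_insert_self _ _))
    refine le_antisymm ?_ (hjb ▸ hφmono.monotoneOn hj self_mem_Iic hj)
    exact (hφe ⟨#T + 1, by omega⟩ ▸ hT' _ (Finset.orderEmbOfFin_mem _ _ _)).2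
  refine ⟨φ, hφ0, hφlast, hφmono, fun m hm r ⟨hmr, hrm⟩ => ⟨⟨?_, ?_⟩, fun hr => ?_⟩⟩
  · exact hφ0 ▸ (hφmono.monotoneOn (Nat.zero_le _) (by simp; omega) (Nat.zero_le m)).trans_lt hmr
  · exact hφlast ▸ hrm.trans_le (hφmono.monotoneOn (by simp; omega) self_mem_Iic (by omega))
  · obtain ⟨j, hj, rfl⟩ := hφT' r (Finset.mem_insert_of_mem (Finset.mem_insert_of_mem hr))
    have h1 := (hφmono.lt_iff_lt (by simp; omega) hj).1 hmr
    have h2 := (hφmono.lt_iff_lt hj (by simp; omega)).1 hrm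
    omega

lemma ae_restrict_eq_of_forall_Ioo {M : ℕ} {u v : ℝ → ℝ} {φ : ℕ → ℝ} {S : Set ℝ}
    (hS : S.Countable)
    (h : ∀ m ≤ M, ∀ t ∈ Ioo (φ m) (φ (m + 1)), t ∉ S → u t = v t) :
    ∀ᵐ t ∂(volume.restrict (Ico (φ 0) (φ (M + 1)))), u t = v t := by
  have hnull : ∀ᵐ t ∂volume, t ∉ S ∪ range φ :=
    measure_eq_zero_iff_ae_notMem.1 ((hS.union (countable_range φ)).measure_zero volume)
  rw [ae_restrict_iff' measurableSet_Ico]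
  filter_upwards [hnull] with t ht htI
  rw [mem_union, not_or] at ht
  obtain ⟨m, hm, htm⟩ := exists_mem_Ico_piece htI
  exact h m hm t ⟨htm.1.lt_of_ne fun h => ht.2 ⟨m, h⟩, htm.2⟩ ht.1

lemma setIntegral_abs_Ico_le {f : ℝ → ℝ} {a b C : ℝ} (hab : a ≤ b) (hf : ∀ t, |f t| ≤ C) :
    ∫ t in Ico a b, |f t| ≤ C * (b - a) := by
  refine (Real.le_norm_self _).trans ((norm_setIntegral_le_of_norm_le_const (C := C)
    measure_Ico_lt_top fun t _ => ?_).trans_eq ?_)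
  · rw [Real.norm_eq_abs, abs_abs]
    exact hf t
  · rw [Real.volume_real_Ico_of_le hab]

lemma exists_stepFunction_ae_eq {n M : ℕ} {nodes : Fin (n + 2) → ℝ}
    (hnodes : ∀ k, nodes k ∈ Icc (-1 : ℝ) 1) {a b : ℝ} {φ : ℕ → ℝ} (hφ0 : φ 0 = a)
    (hφlast : φ (M + 1) = b) (hφ : StrictMonoOn φ (Iic (M + 1))) (w : ℕ → Fin (n + 2))
    {u : ℝ → ℝ} {S : Set ℝ} (hS : S.Countable)
    (hu : ∀ m ≤ M, ∀ t ∈ Ioo (φ m) (φ (m + 1)), t ∉ S → u t = nodes (w m)) :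
    ∃ v : ℝ → ℝ, (∀ᵐ t ∂(volume.restrict (Ico a b)), u t = v t) ∧
      (∀ m ≤ M, ∀ t ∈ Ico (φ m) (φ (m + 1)), v t = nodes (w m)) ∧
      ∫ t in Ico a b, |v t| ≤ b - a ∧ eVariationOn v (Ico a b) ≤ 2 * M := by
  have hab : a ≤ b := hφ0 ▸ hφlast ▸ hφ.monotoneOn (Nat.zero_le _) self_mem_Iic (Nat.zero_le _)
  refine ⟨fun t => nodes (w (pieceIndex φ M t)), ?_,
    fun m hm t ht => by simp only [pieceIndex_eq hφ hm ht], ?_, ?_⟩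
  · rw [← hφ0, ← hφlast]
    exact ae_restrict_eq_of_forall_Ioo hS fun m hm t ht htS =>
      (hu m hm t ht htS).trans (by rw [pieceIndex_eq hφ hm (Ioo_subset_Ico_self ht)])
  · simpa using setIntegral_abs_Ico_le hab fun t => abs_le.2 (hnodes _)
  · refine eVariationOn_comp_le_mul (g := nodes ∘ w) (monotone_pieceIndex.monotoneOn _)
      (fun i j => ?_) fun t _ => pieceIndex_le t
    calc edist _ _ ≤ ENNReal.ofReal (1 - -1) :=
          (edist_le_ofReal (by norm_num)).2 (Real.dist_le_of_mem_Icc (hnodes _) (hnodes _))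
      _ = 2 := by norm_num

/-- uniform bound on the number of switching points. There is
`M*` (independent of the coefficients of the trigonometric polynomial `μ`)
such that any measurable control `u` with values in `[-1,1]` satisfying the
pointwise argmin condition for `εL(v) - μ(t)v` outside a finite set agrees,
a.e. on `[0,π)`, with a step function having at most `M*` switches; in
particular `‖u‖_BV ≤ π + 2·M*`. -/
theorem stmt14 (Ea Eb : Finset ℕ) (hEa : ∀ j ∈ Ea, 0 < j) (hEb : ∀ j ∈ Eb, 0 < j)
    (n : ℕ) (nodes : Fin (n + 2) → ℝ) (hnodes : StrictMono nodes)
    (hn0 : nodes 0 = -1) (hnlast : nodes (Fin.last (n + 1)) = 1)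
    (p : Fin (n + 1) → ℝ) (hpmono : StrictMono p)
    (Lfun : ℝ → ℝ) (hLconv : ConvexOn ℝ (Set.Icc (-1:ℝ) 1) Lfun)
    (hLaff : ∀ k : Fin (n + 1),
      ∀ x ∈ Set.Icc (nodes k.castSucc) (nodes k.succ),
      Lfun x = Lfun (nodes k.castSucc) + p k * (x - nodes k.castSucc))
    (ε : ℝ) (hε : 0 < ε) :
    ∃ Mstar : ℕ,
      ∀ (aC bC : ℕ → ℝ),
        ((∃ j ∈ Ea, aC j ≠ 0) ∨ (∃ j ∈ Eb, bC j ≠ 0)) →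
        ∀ μ : ℝ → ℝ,
          (∀ t, μ t = (∑ j ∈ Ea, aC j * Real.cos (j * t)) +
            (∑ j ∈ Eb, bC j * Real.sin (j * t))) →
        ∀ u : ℝ → ℝ, Measurable u → (∀ t, u t ∈ Set.Icc (-1:ℝ) 1) →
          (∃ S : Set ℝ, S.Finite ∧ ∀ t ∈ Set.Ico (0:ℝ) Real.pi \ S,
            ∀ v ∈ Set.Icc (-1:ℝ) 1,
              ε * Lfun (u t) - μ t * u t ≤ ε * Lfun v - μ t * v) →
          ∃ v : ℝ → ℝ,
            (∀ᵐ t ∂(volume.restrict (Set.Ico 0 Real.pi)), u t = v t) ∧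
            (∃ (M : ℕ) (φ : ℕ → ℝ) (sv : ℕ → Fin (n + 2)),
              M ≤ Mstar ∧ φ 0 = 0 ∧ φ (M + 1) = Real.pi ∧
              (∀ m ≤ M, φ m < φ (m + 1)) ∧
              (∀ m ≤ M, ∀ t ∈ Set.Ico (φ m) (φ (m + 1)),
                v t = nodes (sv m))) ∧
            (∫ t in Set.Ico (0:ℝ) Real.pi, |v t|) ≤ Real.pi ∧
            eVariationOn v (Set.Ico 0 Real.pi) ≤ 2 * Mstar := by
  set d := (Ea ∪ Eb).sup id
  refine ⟨(n + 1) * (2 * d), fun aC bC hab μ hμ u _ hu ⟨S, hS, hmin⟩ => ?_⟩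
  have hμc : Continuous μ := (funext hμ : μ = trigSum Ea Eb aC bC) ▸ continuous_trigSum _ _ _ _
  obtain ⟨T, hTcard, hT, hcross⟩ := exists_finset_trigSum_crossings
    (fun j hj => ⟨hEa j hj, Finset.le_sup (f := id) (Finset.mem_union_left Eb hj)⟩)
    (fun j hj => ⟨hEb j hj, Finset.le_sup (f := id) (Finset.mem_union_right Ea hj)⟩) hab
    (fun k : Fin (n + 1) => ε * p k) (s := Ioo 0 Real.pi)
    (Ioo_subset_Ioc_self.trans (Ioc_subset_Ioc_left (by linarith [Real.pi_pos])))
  rw [Fintype.card_fin] at hTcard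
  obtain ⟨φ, hφ0, hφlast, hφ, hφT⟩ := exists_partition Real.pi_pos T hT
  have hlt : ∀ m ≤ #T, φ m < φ (m + 1) := fun m hm =>
    hφ (by simp; omega) (by simp; omega) (lt_add_one m)
  have hno_cross : ∀ m ≤ #T, ∀ r ∈ Ioo (φ m) (φ (m + 1)), ∀ k, μ r ≠ ε * p k :=
    fun m hm r hr k hk => (hφT m hm hr).2 (hcross r (hφT m hm hr).1 k ((hμ r).symm.trans hk))
  set w : ℕ → Fin (n + 2) := fun m => levelIndex (fun k => ε * p k) (μ ((φ m + φ (m + 1)) / 2))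
  obtain ⟨v, hae, hstep, hint, hvar⟩ := exists_stepFunction_ae_eq
    (fun k => hn0 ▸ hnlast ▸ hnodes.monotone.apply_mem_Icc_zero_last k) hφ0 hφlast hφ w
    hS.countable fun m hm t ht htS => eq_nodes_levelIndex_of_isPreconnected hnodes hn0 hnlast
      hpmono.monotone hLconv hLaff hε isPreconnected_Ioo hμc.continuousOn (hno_cross m hm) ht
      ⟨left_lt_add_div_two.2 (hlt m hm), add_div_two_lt_right.2 (hlt m hm)⟩ (hu t)
      (hmin t ⟨Ioo_subset_Ico_self (hφT m hm ht).1, htS⟩)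
  refine ⟨v, hae, ⟨#T, φ, w, hTcard, hφ0, hφlast, hlt, hstep⟩, by simpa using hint, ?_⟩
  exact hvar.trans (by gcongr)
end
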